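/- arXiv:2307.14467 — 2 statements merged into one kernel-verified Lean document; each statement's English description precedes it below -/
import Mathlib

section
/- Let Φ = {−1,1} and let the kernels ζ_n(σ_n, h) be defined by ζ_n(σ_n,h) = Z_n^h⁻¹ exp(Jβ Σ_{⟨x,y⟩, x,y ∈ V_n} ρ(σ_n(x),σ_n(y)) + Σ_{x ∈ W_n} ρ(σ_n(x), h_x)). Then the consistency condition Σ_{ω_n ∈ Φ^{W_n}} ζ_n(σ_{n−1}ω_n, h) = ζ_{n−1}(σ_{n−1}, h) holds for all n and all σ_{n−1} if and only if for every vertex x, ∏_{y ∈ S(x)} [Σ_{u ∈ {−1,1}} exp(Jβ ρ(1,u) + ρ(u,h_y))] / [Σ_{u ∈ {−1,1}} exp(Jβ ρ(−1,u) + ρ(u,h_y))] = exp(ρ(1,h_x) − ρ(−1,h_x)). -/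
open scoped BigOperators

variable {V : Type*} [DecidableEq V]

/-- Spheres `Wₙ` around the root of a rooted tree with children map `S`. -/
def treeSphere (root : V) (S : V → Finset V) : ℕ → Finset V
  | 0 => {root}
  | n + 1 => (treeSphere root S n).biUnion S

/-- Balls `Vₙ = W₀ ∪ ⋯ ∪ Wₙ`. -/
def treeBall (root : V) (S : V → Finset V) (n : ℕ) : Finset V :=
  (Finset.range (n + 1)).biUnion (treeSphere root S)

/-- The Cayley tree of order `k`, rooted at `root`, with children map `S`. -/
structure CayleyTree (V : Type*) [DecidableEq V] (k : ℕ) where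
  root : V
  S : V → Finset V
  card_S_root : (S root).card = k + 1
  card_S : ∀ x, x ≠ root → (S x).card = k
  root_not_child : ∀ x, root ∉ S x
  parent_unique : ∀ y, y ≠ root → ∃! x, y ∈ S x
  reach : ∀ y, ∃ n, y ∈ treeSphere root S n

variable {k : ℕ} (T : CayleyTree V k)

/-- The exponent of the kernel (2.6):
`Jβ Σ_{⟨x,y⟩ ⊆ Vₙ} ρ(σ(x),σ(y)) + Σ_{x ∈ Wₙ} ρ(σ(x), h_x)`;
spins take values in `{-1,1} ≃ ℤˣ`. -/
noncomputable def kernelEnergy (J β : ℝ) (ρ : ℤˣ → ℝ → ℝ) (h : V → ℝ)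
    (n : ℕ) (σ : V → ℤˣ) : ℝ :=
  J * β * ∑ x ∈ treeBall T.root T.S n, ∑ y ∈ T.S x ∩ treeBall T.root T.S n,
      ρ (σ x) ((σ y : ℤ) : ℝ)
    + ∑ x ∈ treeSphere T.root T.S n, ρ (σ x) (h x)

/-- Extend a configuration on the ball `Vₙ` to all of `V` (by `+1` outside;
the energy only depends on coordinates in `Vₙ`). -/
def extendBall (n : ℕ) (τ : treeBall T.root T.S n → ℤˣ) : V → ℤˣ :=
  fun x => if hx : x ∈ treeBall T.root T.S n then τ ⟨x, hx⟩ else 1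

/-- The partition function `Z_n^h`. -/
noncomputable def partFn (J β : ℝ) (ρ : ℤˣ → ℝ → ℝ) (h : V → ℝ) (n : ℕ) : ℝ :=
  ∑ τ : treeBall T.root T.S n → ℤˣ,
    Real.exp (kernelEnergy T J β ρ h n (extendBall T n τ))

/-- The kernel (2.6): `ζₙ(σₙ, h) = (Z_n^h)⁻¹ exp( … )`. -/
noncomputable def kernel (J β : ℝ) (ρ : ℤˣ → ℝ → ℝ) (h : V → ℝ) (n : ℕ)
    (τ : treeBall T.root T.S n → ℤˣ) : ℝ :=
  Real.exp (kernelEnergy T J β ρ h n (extendBall T n τ)) / partFn T J β ρ h n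

/-- The configuration on `V_{n+1}` built from `σ` on `Vₙ` and `ω` on the
sphere `W_{n+1}`. -/
def mergeConf (n : ℕ) (σ : treeBall T.root T.S n → ℤˣ)
    (ω : treeSphere T.root T.S (n + 1) → ℤˣ) :
    treeBall T.root T.S (n + 1) → ℤˣ :=
  fun x => if hx : (x : V) ∈ treeBall T.root T.S n then σ ⟨x, hx⟩
    else if hx' : (x : V) ∈ treeSphere T.root T.S (n + 1) then ω ⟨x, hx'⟩
    else 1

/-
Write `R_x(s) = ∏_{y ∈ S(x)} (Σ_u exp(Jβ ρ(s,u) + ρ(u,h_y))) / exp ρ(s,h_x)`. The energy on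
`V_{n+1}` is the energy on `V_n`, minus the boundary terms `ρ(σ(x),h_x)` of `W_n`, plus one edge
term and one boundary term for each `y ∈ W_{n+1}`, each involving only `ω(y)` and the spin of the
parent of `y`. Summing out `ω` therefore factorises over `W_{n+1}` and gives
`Σ_ω ζ_{n+1}(σω) = ζ_n(σ) · Z_n/Z_{n+1} · ∏_{x ∈ W_n} R_x(σ(x))`,
so consistency says that `∏_{x ∈ W_n} R_x(σ(x)) = Z_{n+1}/Z_n` for every `σ`. Flipping the
single spin at `x` forces `R_x(1) = R_x(-1)`, which is the stated condition. Conversely, that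
condition makes the product a constant `c_n`, and the same factorisation gives
`Z_{n+1} = Σ_σ exp(H_n(σ)) ∏_{x ∈ W_n} R_x(σ(x)) = c_n Z_n`.
-/

open Finset Real

theorem Finset.eq_of_prod_eq_prod_update {ι M : Type*} [CommMonoidWithZero M] [IsCancelMulZero M]
    [DecidableEq ι] {s : Finset ι} {a : ι} (ha : a ∈ s) {f : ι → M} {b : M}
    (h0 : ∏ x ∈ s \ {a}, f x ≠ 0) (h : ∏ x ∈ s, f x = ∏ x ∈ s, Function.update f a b x) :
    f a = b := by
  rw [prod_update_of_mem ha, prod_eq_mul_prod_sdiff_singleton_of_mem ha] at h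
  exact mul_right_cancel₀ h0 h

section Geometry

variable {root : V} {S : V → Finset V}

theorem mem_treeBall {n : ℕ} {x : V} :
    x ∈ treeBall root S n ↔ ∃ m ≤ n, x ∈ treeSphere root S m := by
  simp [treeBall]

theorem treeSphere_subset_treeBall {m n : ℕ} (h : m ≤ n) :
    treeSphere root S m ⊆ treeBall root S n :=
  fun _ hx => mem_treeBall.2 ⟨m, h, hx⟩

theorem treeBall_succ (n : ℕ) :
    treeBall root S (n + 1) = treeBall root S n ∪ treeSphere root S (n + 1) := by
  rw [treeBall, range_add_one, biUnion_insert, union_comm]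
  rfl

theorem treeBall_subset_succ (n : ℕ) : treeBall root S n ⊆ treeBall root S (n + 1) := by
  rw [treeBall_succ]
  exact subset_union_left

theorem mem_treeSphere_succ {n : ℕ} {x y : V} (hx : x ∈ treeSphere root S n) (hy : y ∈ S x) :
    y ∈ treeSphere root S (n + 1) :=
  mem_biUnion.2 ⟨x, hx, hy⟩

end Geometry

noncomputable def childWeight (J β : ℝ) (ρ : ℤˣ → ℝ → ℝ) (a : ℝ) (s : ℤˣ) : ℝ :=
  ∑ u : ℤˣ, exp (J * β * ρ s ((u : ℤ) : ℝ) + ρ u a)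

theorem childWeight_pos (J β : ℝ) (ρ : ℤˣ → ℝ → ℝ) (a : ℝ) (s : ℤˣ) :
    0 < childWeight J β ρ a s :=
  sum_pos (fun _ _ => exp_pos _) univ_nonempty

namespace CayleyTree

section Geometry

variable {T}

theorem ne_root_of_mem_S {x y : V} (hy : y ∈ T.S x) : y ≠ T.root :=
  fun h => T.root_not_child x (h ▸ hy)

theorem eq_of_mem_S_of_mem_S {x x' y : V} (hx : y ∈ T.S x) (hx' : y ∈ T.S x') : x = x' :=
  (T.parent_unique y (ne_root_of_mem_S hx)).unique hx hx'

theorem pairwiseDisjoint_S (s : Set V) : s.PairwiseDisjoint T.S :=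
  fun _ _ _ _ hne => disjoint_left.2 fun _ hx hx' => hne (eq_of_mem_S_of_mem_S hx hx')

theorem eq_of_mem_treeSphere {m n : ℕ} {y : V} (hm : y ∈ treeSphere T.root T.S m)
    (hn : y ∈ treeSphere T.root T.S n) : m = n := by
  induction m generalizing n y with
  | zero =>
    cases n with
    | zero => rfl
    | succ n =>
      obtain ⟨x, -, hx⟩ := mem_biUnion.1 hn
      exact absurd (mem_singleton.1 hm ▸ hx) (T.root_not_child x)
  | succ m ih =>
    obtain ⟨x, hxm, hyx⟩ := mem_biUnion.1 hm
    cases n with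
    | zero => exact absurd (mem_singleton.1 hn ▸ hyx) (T.root_not_child x)
    | succ n =>
      obtain ⟨x', hxn, hyx'⟩ := mem_biUnion.1 hn
      rw [eq_of_mem_S_of_mem_S hyx hyx'] at hxm
      exact congrArg (· + 1) (ih hxm hxn)

theorem pairwiseDisjoint_treeSphere (s : Set ℕ) : s.PairwiseDisjoint (treeSphere T.root T.S) :=
  fun _ _ _ _ hne => disjoint_left.2 fun _ hm hn => hne (eq_of_mem_treeSphere hm hn)

theorem disjoint_treeBall_treeSphere {m n : ℕ} (h : m < n) :
    Disjoint (treeBall T.root T.S m) (treeSphere T.root T.S n) :=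
  disjoint_left.2 fun _ hx hx' => by
    obtain ⟨j, hj, hxj⟩ := mem_treeBall.1 hx
    have := eq_of_mem_treeSphere hxj hx'
    omega

theorem disjoint_S_treeBall {n : ℕ} {x : V} (hx : x ∈ treeSphere T.root T.S n) :
    Disjoint (T.S x) (treeBall T.root T.S n) :=
  disjoint_left.2 fun _ hy hy' =>
    disjoint_left.1 (disjoint_treeBall_treeSphere n.lt_succ_self) hy' (mem_treeSphere_succ hx hy)

theorem mem_treeSphere_succ_of_notMem_treeBall {n : ℕ} {x : V}
    (hx : x ∈ treeBall T.root T.S (n + 1)) (hx' : x ∉ treeBall T.root T.S n) :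
    x ∈ treeSphere T.root T.S (n + 1) :=
  (mem_union.1 (by rwa [← treeBall_succ])).resolve_left hx'

theorem sum_sum_S_inter_treeBall {M : Type*} [AddCommMonoid M] (n : ℕ) (f : V → V → M) :
    ∑ x ∈ treeBall T.root T.S n, ∑ y ∈ T.S x ∩ treeBall T.root T.S n, f x y =
      ∑ j ∈ range n, ∑ x ∈ treeSphere T.root T.S j, ∑ y ∈ T.S x, f x y := by
  calc _ = ∑ j ∈ range (n + 1), ∑ x ∈ treeSphere T.root T.S j,
        ∑ y ∈ T.S x ∩ treeBall T.root T.S n, f x y :=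
        sum_biUnion (pairwiseDisjoint_treeSphere _)
    _ = _ := by
      rw [sum_range_succ, sum_eq_zero (s := treeSphere T.root T.S n) fun x hx => by
        rw [disjoint_iff_inter_eq_empty.1 (disjoint_S_treeBall hx), sum_empty], add_zero]
      refine sum_congr rfl fun j hj => sum_congr rfl fun x hx => ?_
      rw [inter_eq_left.2 fun y hy =>
        treeSphere_subset_treeBall (mem_range.1 hj) (mem_treeSphere_succ hx hy)]

variable (T) in
open Classical in
noncomputable def parent (y : V) : V :=
  if h : ∃ x, y ∈ T.S x then h.choose else T.root

theorem parent_eq_of_mem_S {x y : V} (hy : y ∈ T.S x) : T.parent y = x := by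
  have h : ∃ x, y ∈ T.S x := ⟨x, hy⟩
  rw [parent, dif_pos h]
  exact eq_of_mem_S_of_mem_S h.choose_spec hy

theorem prod_treeSphere_succ {M : Type*} [CommMonoid M] (n : ℕ) (f : V → V → M) :
    ∏ y ∈ treeSphere T.root T.S (n + 1), f (T.parent y) y =
      ∏ x ∈ treeSphere T.root T.S n, ∏ y ∈ T.S x, f x y :=
  (prod_biUnion (pairwiseDisjoint_S _)).trans <|
    prod_congr rfl fun _ _ => prod_congr rfl fun _ hy => by rw [parent_eq_of_mem_S hy]

end Geometry

section Energy

variable (J β : ℝ) (ρ : ℤˣ → ℝ → ℝ) (h : V → ℝ)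

noncomputable def boundaryFactor (x : V) (s : ℤˣ) : ℝ :=
  (∏ y ∈ T.S x, childWeight J β ρ (h y) s) / exp (ρ s (h x))

theorem boundaryFactor_pos (x : V) (s : ℤˣ) : 0 < T.boundaryFactor J β ρ h x s :=
  div_pos (prod_pos fun _ _ => childWeight_pos ..) (exp_pos _)

theorem kernelEnergy_succ (n : ℕ) (τ : V → ℤˣ) :
    kernelEnergy T J β ρ h (n + 1) τ = kernelEnergy T J β ρ h n τ +
      ∑ x ∈ treeSphere T.root T.S n,
        (∑ y ∈ T.S x, (J * β * ρ (τ x) ((τ y : ℤ) : ℝ) + ρ (τ y) (h y)) - ρ (τ x) (h x)) := by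
  have hfield : ∑ y ∈ treeSphere T.root T.S (n + 1), ρ (τ y) (h y) =
      ∑ x ∈ treeSphere T.root T.S n, ∑ y ∈ T.S x, ρ (τ y) (h y) :=
    sum_biUnion (pairwiseDisjoint_S _)
  simp only [kernelEnergy, sum_sum_S_inter_treeBall, sum_range_succ, hfield, sum_sub_distrib,
    sum_add_distrib, mul_add, mul_sum]
  ring

variable {J β ρ h} in
theorem kernelEnergy_congr {n : ℕ} {τ τ' : V → ℤˣ}
    (hτ : ∀ x ∈ treeBall T.root T.S n, τ x = τ' x) :
    kernelEnergy T J β ρ h n τ = kernelEnergy T J β ρ h n τ' := by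
  unfold kernelEnergy
  congr 1
  · refine congrArg _ (sum_congr rfl fun x hx => sum_congr rfl fun y hy => ?_)
    rw [hτ x hx, hτ y (mem_inter.1 hy).2]
  · exact sum_congr rfl fun x hx => by rw [hτ x (treeSphere_subset_treeBall le_rfl hx)]

end Energy

section Configurations

variable {n : ℕ} {σ : treeBall T.root T.S n → ℤˣ} {ω : treeSphere T.root T.S (n + 1) → ℤˣ}

theorem extendBall_of_mem (τ : treeBall T.root T.S n → ℤˣ) {x : V}
    (hx : x ∈ treeBall T.root T.S n) : extendBall T n τ x = τ ⟨x, hx⟩ :=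
  dif_pos hx

theorem extendBall_mergeConf_of_mem_treeBall {x : V} (hx : x ∈ treeBall T.root T.S n) :
    extendBall T (n + 1) (mergeConf T n σ ω) x = extendBall T n σ x := by
  rw [extendBall_of_mem T _ (treeBall_subset_succ n hx), extendBall_of_mem T _ hx]
  exact dif_pos hx

theorem extendBall_mergeConf_of_mem_treeSphere {y : V} (hy : y ∈ treeSphere T.root T.S (n + 1)) :
    extendBall T (n + 1) (mergeConf T n σ ω) y = ω ⟨y, hy⟩ := by
  have hy' : y ∉ treeBall T.root T.S n :=
    disjoint_right.1 (disjoint_treeBall_treeSphere n.lt_succ_self) hy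
  rw [extendBall_of_mem T _ (treeSphere_subset_treeBall le_rfl hy)]
  simp only [mergeConf, hy', hy, dite_false, dite_true]

variable (n) in
theorem mergeConf_bijective :
    Function.Bijective fun p : (treeBall T.root T.S n → ℤˣ) ×
      (treeSphere T.root T.S (n + 1) → ℤˣ) => mergeConf T n p.1 p.2 := by
  refine ⟨fun ⟨σ, ω⟩ ⟨σ', ω'⟩ hp => ?_, fun τ => ⟨(fun x => τ ⟨x, treeBall_subset_succ n x.2⟩,
    fun y => τ ⟨y, treeSphere_subset_treeBall le_rfl y.2⟩), funext fun z => ?_⟩⟩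
  · have hext := congrArg (extendBall T (n + 1)) hp
    refine Prod.ext (funext fun x => ?_) (funext fun y => ?_)
    · simpa [extendBall_mergeConf_of_mem_treeBall, extendBall_of_mem] using congrFun hext x
    · simpa [extendBall_mergeConf_of_mem_treeSphere] using congrFun hext y
  · by_cases hz : (z : V) ∈ treeBall T.root T.S n
    · simp [mergeConf, hz]
    · simp [mergeConf, hz, mem_treeSphere_succ_of_notMem_treeBall z.2 hz]

end Configurations

section Recursion

variable (J β : ℝ) (ρ : ℤˣ → ℝ → ℝ) (h : V → ℝ) (n : ℕ)

theorem exp_kernelEnergy_mergeConf (σ : treeBall T.root T.S n → ℤˣ)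
    (ω : treeSphere T.root T.S (n + 1) → ℤˣ) :
    exp (kernelEnergy T J β ρ h (n + 1) (extendBall T (n + 1) (mergeConf T n σ ω))) =
      exp (kernelEnergy T J β ρ h n (extendBall T n σ)) *
        (∏ a : treeSphere T.root T.S (n + 1),
          exp (J * β * ρ (extendBall T n σ (T.parent a)) ((ω a : ℤ) : ℝ) + ρ (ω a) (h a))) /
        ∏ x ∈ treeSphere T.root T.S n, exp (ρ (extendBall T n σ x) (h x)) := by
  set τ := extendBall T (n + 1) (mergeConf T n σ ω)
  set s := extendBall T n σ
  have hτs : ∀ x ∈ treeBall T.root T.S n, τ x = s x :=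
    fun x hx => extendBall_mergeConf_of_mem_treeBall T hx
  have hτω : ∀ a : treeSphere T.root T.S (n + 1), τ a = ω a :=
    fun a => extendBall_mergeConf_of_mem_treeSphere T a.2
  rw [kernelEnergy_succ, kernelEnergy_congr T hτs, exp_add, mul_div_assoc]
  congr 1
  have hW : ∀ x ∈ treeSphere T.root T.S n, τ x = s x :=
    fun x hx => hτs x (treeSphere_subset_treeBall le_rfl hx)
  simp only [exp_sum, exp_sub, prod_div_distrib]
  congr 1
  · calc _ = ∏ x ∈ treeSphere T.root T.S n, ∏ y ∈ T.S x,
            exp (J * β * ρ (s x) ((τ y : ℤ) : ℝ) + ρ (τ y) (h y)) :=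
          prod_congr rfl fun x hx => by rw [hW x hx]
      _ = ∏ y ∈ treeSphere T.root T.S (n + 1),
            exp (J * β * ρ (s (T.parent y)) ((τ y : ℤ) : ℝ) + ρ (τ y) (h y)) :=
          (prod_treeSphere_succ n fun x y => _).symm
      _ = _ := by
          rw [← prod_coe_sort]
          exact prod_congr rfl fun a _ => by rw [hτω]
  · exact prod_congr rfl fun x hx => by rw [hW x hx]

theorem sum_exp_kernelEnergy_mergeConf (σ : treeBall T.root T.S n → ℤˣ) :
    ∑ ω : treeSphere T.root T.S (n + 1) → ℤˣ,
        exp (kernelEnergy T J β ρ h (n + 1) (extendBall T (n + 1) (mergeConf T n σ ω))) =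
      exp (kernelEnergy T J β ρ h n (extendBall T n σ)) *
        ∏ x ∈ treeSphere T.root T.S n, T.boundaryFactor J β ρ h x (extendBall T n σ x) := by
  have hsum : ∑ ω : treeSphere T.root T.S (n + 1) → ℤˣ, ∏ a : treeSphere T.root T.S (n + 1),
        exp (J * β * ρ (extendBall T n σ (T.parent a)) ((ω a : ℤ) : ℝ) + ρ (ω a) (h a)) =
      ∏ x ∈ treeSphere T.root T.S n, ∏ y ∈ T.S x, childWeight J β ρ (h y) (extendBall T n σ x) :=
    (Fintype.prod_sum _).symm.trans <|
      (prod_coe_sort _ fun y => childWeight J β ρ (h y) (extendBall T n σ (T.parent y))).trans <|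
        prod_treeSphere_succ n fun x y => childWeight J β ρ (h y) (extendBall T n σ x)
  simp only [exp_kernelEnergy_mergeConf, ← sum_div, ← mul_sum, hsum, boundaryFactor,
    prod_div_distrib, mul_div_assoc]

theorem partFn_succ :
    partFn T J β ρ h (n + 1) = ∑ σ : treeBall T.root T.S n → ℤˣ,
      exp (kernelEnergy T J β ρ h n (extendBall T n σ)) *
        ∏ x ∈ treeSphere T.root T.S n, T.boundaryFactor J β ρ h x (extendBall T n σ x) := by
  rw [partFn, ← Fintype.sum_bijective _ (mergeConf_bijective T n) _ _ fun _ => rfl,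
    Fintype.sum_prod_type]
  exact sum_congr rfl fun σ _ => sum_exp_kernelEnergy_mergeConf T J β ρ h n σ

theorem partFn_pos : 0 < partFn T J β ρ h n :=
  sum_pos (fun _ _ => exp_pos _) univ_nonempty

theorem sum_kernel_mergeConf_eq_iff (σ : treeBall T.root T.S n → ℤˣ) :
    ∑ ω : treeSphere T.root T.S (n + 1) → ℤˣ, kernel T J β ρ h (n + 1) (mergeConf T n σ ω) =
        kernel T J β ρ h n σ ↔
      (∏ x ∈ treeSphere T.root T.S n, T.boundaryFactor J β ρ h x (extendBall T n σ x)) *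
        partFn T J β ρ h n = partFn T J β ρ h (n + 1) := by
  simp only [kernel, ← sum_div, sum_exp_kernelEnergy_mergeConf]
  rw [div_eq_div_iff (partFn_pos T J β ρ h _).ne' (partFn_pos T J β ρ h n).ne', mul_assoc,
    mul_right_inj' (exp_ne_zero _)]

end Recursion

section Consistency

variable {J β : ℝ} {ρ : ℤˣ → ℝ → ℝ} {h : V → ℝ} {n : ℕ}

theorem boundaryFactor_eq_of_forall_mul_partFn_eq
    (hc : ∀ σ : treeBall T.root T.S n → ℤˣ,
      (∏ x ∈ treeSphere T.root T.S n, T.boundaryFactor J β ρ h x (extendBall T n σ x)) *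
        partFn T J β ρ h n = partFn T J β ρ h (n + 1))
    {x₀ : V} (hx₀ : x₀ ∈ treeSphere T.root T.S n) :
    T.boundaryFactor J β ρ h x₀ 1 = T.boundaryFactor J β ρ h x₀ (-1) := by
  have hconst : ∀ c : V → ℤˣ,
      (∏ x ∈ treeSphere T.root T.S n, T.boundaryFactor J β ρ h x (c x)) *
        partFn T J β ρ h n = partFn T J β ρ h (n + 1) := fun c => by
    rw [← hc fun z => c z]
    congr 1
    exact prod_congr rfl fun x hx => by
      rw [extendBall_of_mem T _ (treeSphere_subset_treeBall le_rfl hx)]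
  have hflip := mul_right_cancel₀ (partFn_pos T J β ρ h n).ne'
    ((hconst fun _ => 1).trans (hconst (Function.update (fun _ => 1) x₀ (-1))).symm)
  simp only [Function.apply_update fun x => T.boundaryFactor J β ρ h x] at hflip
  exact eq_of_prod_eq_prod_update hx₀
    (prod_pos fun x _ => T.boundaryFactor_pos J β ρ h x 1).ne' hflip

theorem mul_partFn_eq_of_boundaryFactor_eq
    (hR : ∀ x ∈ treeSphere T.root T.S n,
      T.boundaryFactor J β ρ h x 1 = T.boundaryFactor J β ρ h x (-1))
    (σ : treeBall T.root T.S n → ℤˣ) :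
    (∏ x ∈ treeSphere T.root T.S n, T.boundaryFactor J β ρ h x (extendBall T n σ x)) *
      partFn T J β ρ h n = partFn T J β ρ h (n + 1) := by
  have hconst : ∀ τ : treeBall T.root T.S n → ℤˣ,
      ∏ x ∈ treeSphere T.root T.S n, T.boundaryFactor J β ρ h x (extendBall T n τ x) =
        ∏ x ∈ treeSphere T.root T.S n, T.boundaryFactor J β ρ h x 1 :=
    fun τ => prod_congr rfl fun x hx => by
      rcases Int.units_eq_one_or (extendBall T n τ x) with hτ | hτ
      · rw [hτ]
      · rw [hτ, hR x hx]
  rw [partFn_succ]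
  simp only [hconst]
  rw [← sum_mul, partFn, mul_comm]

variable (J β ρ h) in
theorem prod_childWeight_div_eq_exp_iff (x : V) :
    ∏ y ∈ T.S x, childWeight J β ρ (h y) 1 / childWeight J β ρ (h y) (-1) =
        exp (ρ 1 (h x) - ρ (-1) (h x)) ↔
      T.boundaryFactor J β ρ h x 1 = T.boundaryFactor J β ρ h x (-1) := by
  rw [prod_div_distrib, exp_sub, boundaryFactor, boundaryFactor,
    div_eq_div_iff (prod_pos fun _ _ => childWeight_pos ..).ne' (exp_pos _).ne',
    div_eq_div_iff (exp_pos _).ne' (exp_pos _).ne', mul_comm (exp _)]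

end Consistency

end CayleyTree

/-- Theorem 2.1 (compatibility criterion): the kernels (2.6) are consistent,
`Σ_{ωₙ} ζₙ(σ_{n-1} ωₙ, h) = ζ_{n-1}(σ_{n-1}, h)`, if and only if for every
vertex `x`,
`∏_{y ∈ S(x)} [Σ_u exp(Jβ ρ(1,u) + ρ(u,h_y))]/[Σ_u exp(Jβ ρ(-1,u) + ρ(u,h_y))]
 = exp(ρ(1,h_x) − ρ(-1,h_x))`. -/
theorem kernels_compatible_iff (J β : ℝ) (ρ : ℤˣ → ℝ → ℝ) (h : V → ℝ) :
    (∀ (n : ℕ) (σ : treeBall T.root T.S n → ℤˣ),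
        (∑ ω : treeSphere T.root T.S (n + 1) → ℤˣ,
            kernel T J β ρ h (n + 1) (mergeConf T n σ ω)) =
          kernel T J β ρ h n σ) ↔
      ∀ x : V,
        (∏ y ∈ T.S x,
            (∑ u : ℤˣ, Real.exp (J * β * ρ 1 ((u : ℤ) : ℝ) + ρ u (h y))) /
              (∑ u : ℤˣ, Real.exp (J * β * ρ (-1) ((u : ℤ) : ℝ) + ρ u (h y)))) =
          Real.exp (ρ 1 (h x) - ρ (-1) (h x)) := by
  refine (forall₂_congr fun n σ => T.sum_kernel_mergeConf_eq_iff J β ρ h n σ).trans <|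
    Iff.trans ?_ (forall_congr' fun x => (T.prod_childWeight_div_eq_exp_iff J β ρ h x).symm)
  refine ⟨fun hc x => ?_, fun hR n => T.mul_partFn_eq_of_boundaryFactor_eq fun x _ => hR x⟩
  obtain ⟨n, hx⟩ := T.reach x
  exact T.boundaryFactor_eq_of_forall_mul_partFn_eq (hc n) hx
end

section
/- For the Ising model on the Cayley tree of order k, the constant field h_x ≡ 0 always solves the consistency equation h_x = Σ_{y∈S(x)} f(h_y, θ); moreover a constant solution h_x ≡ h satisfies h = k·f(h,θ), and for θ = tanh(Jβ) with J, β > 0 and kθ > 1 (i.e. k·tanh(Jβ) > 1) the equation h = k·f(h,θ) has at least one strictly positive solution. -/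
/-- The Cayley-tree Ising recursion function
`f(h,θ) = ½ ln[((1+θ)e^{2h}+(1−θ))/((1−θ)e^{2h}+(1+θ))]`. -/
noncomputable def isingF (h θ : ℝ) : ℝ :=
  (1 / 2) * Real.log (((1 + θ) * Real.exp (2 * h) + (1 - θ)) /
    ((1 - θ) * Real.exp (2 * h) + (1 + θ)))

/-! The map `g(h) = k f(h,θ)` satisfies `g(0) = 0`, `g'(0) = kθ > 1` and `g ≤ k artanh θ`, so
`g(h) - h` is positive just right of `0` and negative far out; by the intermediate value theorem it
vanishes somewhere on `(0, ∞)`. -/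

open Real Set Filter Topology

theorem exists_pos_fixed_of_one_lt_deriv {F : ℝ → ℝ} {d M : ℝ} (hcont : ContinuousOn F (Ioi 0))
    (hF0 : F 0 = 0) (hd : HasDerivAt F d 0) (hd1 : 1 < d) (hM : ∀ x > 0, F x ≤ M) :
    ∃ h, 0 < h ∧ h = F h := by
  obtain ⟨a, ha, hFa⟩ : ∃ a > 0, a < F a := by
    have hslope : ∀ᶠ t in 𝓝[>] 0, 1 < t⁻¹ • (F (0 + t) - F 0) :=
      hd.tendsto_slope_zero_right.eventually (lt_mem_nhds hd1)
    obtain ⟨a, hgt, ha⟩ := (hslope.and self_mem_nhdsWithin).exists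
    simp only [zero_add, hF0, sub_zero, smul_eq_mul] at hgt
    exact ⟨a, ha, by rwa [lt_inv_mul_iff₀ ha, mul_one] at hgt⟩
  set b := |M| + 1
  have hb : 0 < b := by positivity
  have hFb : F b < b := (hM b hb).trans_lt (by linarith [le_abs_self M])
  have hcont' : ContinuousOn (fun x => F x - x) (uIcc a b) :=
    (hcont.sub continuousOn_id).mono fun x hx => (lt_min ha hb).trans_le hx.1
  obtain ⟨c, hc, hFc⟩ := intermediate_value_uIcc hcont'
    (mem_uIcc_of_ge (by linarith) (by linarith) : (0 : ℝ) ∈ uIcc (F a - a) (F b - b))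
  exact ⟨c, (lt_min ha hb).trans_le hc.1, by linarith [hFc]⟩

section isingF

theorem isingF_zero (θ : ℝ) : isingF 0 θ = 0 := by
  simp [isingF]

theorem hasDerivAt_isingF_zero (θ : ℝ) : HasDerivAt (fun h => isingF h θ) θ 0 := by
  have hexp : HasDerivAt (fun h : ℝ => exp (2 * h)) 2 0 := by
    simpa using ((hasDerivAt_id (0 : ℝ)).const_mul 2).exp
  have hquot := ((hexp.const_mul (1 + θ)).add_const (1 - θ)).fun_div
    ((hexp.const_mul (1 - θ)).add_const (1 + θ)) (by norm_num)
  have hlog := (hquot.log (by norm_num)).const_mul (1 / 2)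
  refine hlog.congr_deriv ?_
  norm_num
  ring

variable {θ : ℝ}

theorem isingF_numerator_pos (hθ : |θ| < 1) (h : ℝ) :
    0 < (1 + θ) * exp (2 * h) + (1 - θ) := by
  obtain ⟨hθ₁, hθ₂⟩ := abs_lt.1 hθ
  have : 0 < 1 + θ := by linarith
  have : 0 < 1 - θ := by linarith
  positivity

theorem isingF_denominator_pos (hθ : |θ| < 1) (h : ℝ) :
    0 < (1 - θ) * exp (2 * h) + (1 + θ) := by
  obtain ⟨hθ₁, hθ₂⟩ := abs_lt.1 hθ
  have : 0 < 1 - θ := by linarith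
  have : 0 < 1 + θ := by linarith
  positivity

theorem continuous_isingF (hθ : |θ| < 1) : Continuous fun h => isingF h θ := by
  refine continuous_const.mul (Continuous.log ?_ fun h => ?_)
  · exact (by fun_prop : Continuous fun h => (1 + θ) * exp (2 * h) + (1 - θ)).div
      (by fun_prop) fun h => (isingF_denominator_pos hθ h).ne'
  · exact (div_pos (isingF_numerator_pos hθ h) (isingF_denominator_pos hθ h)).ne'

theorem isingF_le_artanh (hθ₀ : 0 ≤ θ) (hθ₁ : θ < 1) (h : ℝ) : isingF h θ ≤ artanh θ := by
  have hθ : |θ| < 1 := abs_lt.2 ⟨by linarith, hθ₁⟩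
  rw [artanh_eq_half_log ⟨by linarith, hθ₁.le⟩, isingF]
  refine mul_le_mul_of_nonneg_left (log_le_log ?_ ?_) (by norm_num)
  · exact div_pos (isingF_numerator_pos hθ h) (isingF_denominator_pos hθ h)
  rw [div_le_div_iff₀ (isingF_denominator_pos hθ h) (by linarith)]
  nlinarith [exp_pos (2 * h)]

theorem exists_pos_eq_mul_isingF {k : ℝ} (hk : 0 ≤ k) (hθ₁ : θ < 1) (hkθ : 1 < k * θ) :
    ∃ h, 0 < h ∧ h = k * isingF h θ := by
  have hθ₀ : 0 < θ := pos_of_mul_pos_right (one_pos.trans hkθ) hk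
  have hθ : |θ| < 1 := abs_lt.2 ⟨by linarith, hθ₁⟩
  exact exists_pos_fixed_of_one_lt_deriv ((continuous_isingF hθ).const_mul k).continuousOn
    (by rw [isingF_zero, mul_zero]) ((hasDerivAt_isingF_zero θ).const_mul k) hkθ
    fun x _ => mul_le_mul_of_nonneg_left (isingF_le_artanh hθ₀.le hθ₁ x) hk

end isingF

/-- For the Ising model on a Cayley tree of order `k` with children map `S`:
the zero field always solves the consistency equation
`h_x = Σ_{y ∈ S(x)} f(h_y, θ)`; a constant field `h` solves it iff
`h = k·f(h,θ)` (whenever `|S(x)| = k`); and for `J, β > 0` with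
`k·tanh(Jβ) > 1` the equation `h = k·f(h,θ)`, `θ = tanh(Jβ)`, has at least
one strictly positive solution. -/
theorem ising_constant_solutions (V : Type*) (S : V → Finset V) (k : ℕ)
    (J β θ : ℝ) :
    (∀ x : V, (0 : ℝ) = ∑ y ∈ S x, isingF 0 θ) ∧
      (∀ (h : ℝ) (x : V), (S x).card = k →
        (∑ y ∈ S x, isingF h θ) = (k : ℝ) * isingF h θ) ∧
      (0 < J → 0 < β → 1 < (k : ℝ) * Real.tanh (J * β) →
        ∃ h : ℝ, 0 < h ∧ h = (k : ℝ) * isingF h (Real.tanh (J * β))) := by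
  refine ⟨fun x => by simp [isingF_zero], fun h x hcard => ?_, fun _ _ hkθ => ?_⟩
  · rw [Finset.sum_const, hcard, nsmul_eq_mul]
  · exact exists_pos_eq_mul_isingF k.cast_nonneg (tanh_lt_one _) hkθ
end
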